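/- arXiv:1807.00386 — 3 statements merged into one kernel-verified Lean document; each statement's English description precedes it below -/
import Mathlib

section
/- Let E be a Banach space, U an open subset of [0,∞)^s × E, and f : U → ℝ^n a C¹ map. Suppose x ∈ U lies in the maximally degenerate corner {0}^s × E and the restriction of the derivative d_x f to {0}^s × E is surjective onto ℝ^n. Then for K := ker((d_x f)|_{{0}^s × E}), K has a closed complement L in E, and for any such complement the map g(v,e) = (f(v,e), v, pr(e)), where pr : E = K ⊕ L → K is the projection along L, restricts to a C¹-diffeomorphism from an open neighborhood of x in U onto an open subset of ℝ^n × [0,∞)^s × K. -/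
/-!
The derivative `A (v, e) = (f' (v, e), v, pr e)` is a linear isomorphism
`ℝ^s × E ≃ ℝⁿ × ℝ^s × K`, because `f' (0, ·)` maps `L` isomorphically onto `ℝⁿ`. The map
`g (v, e) = (f (v, e), v, pr e)` is only `C¹` on the quadrant, but `g ∘ r + A ∘ (id - r)`,
where `r (v, e) = (v⁺, e)` is the 1-Lipschitz retraction onto the quadrant, approximates `A` on a
whole ball around `x`, so the inverse function theorem for approximately linear maps applies to
it. This extension keeps the `v`-coordinate, hence maps exactly the quadrant part of the ball onto
the quadrant part of its image, where it agrees with `g`. The inverse is `C¹` since its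
derivative at `q` is the inverse of the derivative of `g` at `g⁻¹ q`.
-/

open Set Filter Topology Metric NNReal

section General

variable {𝕜 F G : Type*} [NontriviallyNormedField 𝕜] [NormedAddCommGroup F] [NormedSpace 𝕜 F]
  [NormedAddCommGroup G] [NormedSpace 𝕜 G]

theorem contDiffOn_one_of_hasFDerivWithinAt {f : F → G} {f' : F → F →L[𝕜] G} {s : Set F}
    (hf : ∀ x ∈ s, HasFDerivWithinAt f (f' x) s x) (hf' : ContinuousOn f' s) :
    ContDiffOn 𝕜 1 f s := by
  rw [← zero_add 1, contDiffOn_succ_iff_hasFDerivWithinAt (by simp)]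
  intro x hx
  exact ⟨s, by rw [insert_eq_of_mem hx]; exact self_mem_nhdsWithin, by simp, f', hf,
    contDiffOn_zero.2 hf'⟩

theorem ContDiffOn.contDiffOn_one_of_rightInvOn [CompleteSpace F] {g : F → G} {h : G → F}
    {s : Set F} {t : Set G} (hg : ContDiffOn 𝕜 1 g s) (hs : UniqueDiffOn 𝕜 s)
    (hh : ContinuousOn h t) (hts : MapsTo h t s) (hgh : RightInvOn h g t)
    (hinv : ∀ q ∈ t, (fderivWithin 𝕜 g s (h q)).IsInvertible) :
    ContDiffOn 𝕜 1 h t := by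
  have hD : ContinuousOn (fderivWithin 𝕜 g s) s := hg.continuousOn_fderivWithin hs le_rfl
  refine contDiffOn_one_of_hasFDerivWithinAt
    (f' := fun q => (fderivWithin 𝕜 g s (h q)).inverse) (fun q hq => ?_) fun q hq =>
      (hinv q hq).contDiffAt_map_inverse.continuousAt (n := 0).comp_continuousWithinAt
        (f := fun q => fderivWithin 𝕜 g s (h q)) ((hD.comp hh hts) q hq)
  obtain ⟨e, he⟩ := hinv q hq
  have hgq : HasFDerivWithinAt g (e : F →L[𝕜] G) s (h q) := by
    rw [he]; exact (hg.differentiableOn one_ne_zero _ (hts hq)).hasFDerivWithinAt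
  rw [← he, ContinuousLinearMap.inverse_equiv]
  exact hgq.of_local_left_inverse ((hh q hq).tendsto_nhdsWithin hts) hq
    (eventually_nhdsWithin_of_forall hgh)

theorem ApproximatesLinearOn.comp_retraction {f : F → G} {A : F →L[𝕜] G} {s t : Set F}
    {c : ℝ≥0} {r : F → F} (hf : ApproximatesLinearOn f A t c) (hr : LipschitzWith 1 r)
    (hrs : MapsTo r s t) : ApproximatesLinearOn (fun p => f (r p) + A (p - r p)) A s c := by
  intro p hp q hq
  calc ‖f (r p) + A (p - r p) - (f (r q) + A (q - r q)) - A (p - q)‖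
      = ‖f (r p) - f (r q) - A (r p - r q)‖ := by congr 1; simp only [map_sub]; abel
    _ ≤ c * ‖r p - r q‖ := hf _ (hrs hp) _ (hrs hq)
    _ ≤ c * ‖p - q‖ := by
      gcongr
      simpa [dist_eq_norm] using hr.dist_le_mul p q

end General

section Real

variable {F G : Type*} [NormedAddCommGroup F] [NormedSpace ℝ F]
  [NormedAddCommGroup G] [NormedSpace ℝ G]

theorem ContDiffOn.exists_approximatesLinearOn_ball_inter [CompleteSpace F] {g : F → G}
    {V Q : Set F} (hV : IsOpen V) (hQ : Convex ℝ Q) (hg : ContDiffOn ℝ 1 g (V ∩ Q))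
    (hU : UniqueDiffOn ℝ (V ∩ Q)) {x : F} (hx : x ∈ V ∩ Q) {A : F ≃L[ℝ] G}
    (hgA : HasFDerivWithinAt g (A : F →L[ℝ] G) (V ∩ Q) x) {c : ℝ≥0} (hc : 0 < c) :
    ∃ ε > 0, ball x ε ∩ Q ⊆ V ∩ Q ∧
      (∀ p ∈ ball x ε ∩ Q, (fderivWithin ℝ g (V ∩ Q) p).IsInvertible) ∧
      ApproximatesLinearOn g (A : F →L[ℝ] G) (ball x ε ∩ Q) c := by
  set D := fderivWithin ℝ g (V ∩ Q)
  have hVx : V ∈ 𝓝[Q] x := mem_nhdsWithin_of_mem_nhds (hV.mem_nhds hx.1)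
  have hDx : Tendsto D (𝓝[Q] x) (𝓝 A) := by
    rw [← hgA.fderivWithin (hU x hx), ← nhdsWithin_inter_of_mem hVx]
    exact hg.continuousOn_fderivWithin hU le_rfl x hx
  have hnear : ∀ᶠ p in 𝓝[Q] x, p ∈ V ∧ ‖D p - A‖ < c ∧ (D p).IsInvertible :=
    Filter.Eventually.and hVx <|
      ((tendsto_iff_norm_sub_tendsto_zero.1 hDx).eventually (gt_mem_nhds hc)).and <|
        hDx.eventually (ContinuousLinearEquiv.isOpen.mem_nhds ⟨A, rfl⟩)
  obtain ⟨ε, hε, hball⟩ := Metric.mem_nhdsWithin_iff.1 hnear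
  have hsub : ball x ε ∩ Q ⊆ V ∩ Q := fun p hp => ⟨(hball hp).1, hp.2⟩
  refine ⟨ε, hε, hsub, fun p hp => (hball hp).2.2, fun p hp q hq => ?_⟩
  exact ((convex_ball x ε).inter hQ).norm_image_sub_le_of_norm_hasFDerivWithin_le'
    (fun y hy => ((hg.differentiableOn one_ne_zero y (hsub hy)).hasFDerivWithinAt.mono hsub))
    (fun y hy => (hball hy).2.1.le) hq hp

end Real

section Quadrant

variable {ι E : Type*}

def quadrant (ι E : Type*) : Set ((ι → ℝ) × E) := {p | ∀ i, 0 ≤ p.1 i}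

def quadrantRetraction (ι E : Type*) (p : (ι → ℝ) × E) : (ι → ℝ) × E :=
  (fun i => max (p.1 i) 0, p.2)

theorem quadrant_eq_pi_prod : quadrant ι E = (univ.pi fun _ => Ici 0) ×ˢ univ := by
  ext p
  exact ⟨fun hp => ⟨fun i _ => hp i, trivial⟩, fun hp i => hp.1 i (mem_univ i)⟩

theorem quadrantRetraction_mem (p : (ι → ℝ) × E) : quadrantRetraction ι E p ∈ quadrant ι E :=
  fun _ => le_max_right _ _

theorem quadrantRetraction_of_mem {p : (ι → ℝ) × E} (hp : p ∈ quadrant ι E) :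
    quadrantRetraction ι E p = p :=
  Prod.ext (funext fun i => max_eq_left (hp i)) rfl

variable [NormedAddCommGroup E]

theorem lipschitzWith_quadrantRetraction [Fintype ι] :
    LipschitzWith 1 (quadrantRetraction ι E) := by
  refine LipschitzWith.of_dist_le_mul fun p q => ?_
  rw [NNReal.coe_one, one_mul, Prod.dist_eq, Prod.dist_eq]
  refine max_le_max ((dist_pi_le_iff dist_nonneg).2 fun i => ?_) le_rfl
  exact (abs_max_sub_max_le_abs _ _ _).trans (dist_le_pi_dist p.1 q.1 i)

variable [NormedSpace ℝ E]

theorem convex_quadrant : Convex ℝ (quadrant ι E) := by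
  rw [quadrant_eq_pi_prod]
  exact (convex_pi fun _ _ => convex_Ici 0).prod convex_univ

theorem uniqueDiffOn_quadrant : UniqueDiffOn ℝ (quadrant ι E) := by
  rw [quadrant_eq_pi_prod]
  exact (UniqueDiffOn.univ_pi fun _ => uniqueDiffOn_Ici 0).prod uniqueDiffOn_univ

end Quadrant

def IsC1DiffeoOn {X W : Type*} [NormedAddCommGroup X] [NormedSpace ℝ X] [NormedAddCommGroup W]
    [NormedSpace ℝ W] (g : X → W) (h : W → X) (s : Set X) (t : Set W) : Prop :=
  BijOn g s t ∧ ContDiffOn ℝ 1 g s ∧ ContDiffOn ℝ 1 h t ∧ LeftInvOn h g s ∧ RightInvOn h g t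

theorem OpenPartialHomeomorph.isC1DiffeoOn_inter {F G : Type*} [NormedAddCommGroup F]
    [NormedSpace ℝ F] [CompleteSpace F] [NormedAddCommGroup G] [NormedSpace ℝ G]
    (Φ : OpenPartialHomeomorph F G) {g : F → G} {U Q : Set F} {Q' : Set G}
    (hg : ContDiffOn ℝ 1 g U) (hU : UniqueDiffOn ℝ U) (hsub : Φ.source ∩ Q ⊆ U)
    (hΦg : EqOn Φ g (Φ.source ∩ Q)) (hΦQ : ∀ p ∈ Φ.source, Φ p ∈ Q' ↔ p ∈ Q)
    (hinv : ∀ p ∈ Φ.source ∩ Q, (fderivWithin ℝ g U p).IsInvertible) :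
    IsC1DiffeoOn g Φ.symm (Φ.source ∩ Q) (Φ.target ∩ Q') := by
  have hmaps : MapsTo Φ.symm (Φ.target ∩ Q') (Φ.source ∩ Q) := fun q hq =>
    ⟨Φ.map_target hq.1, (hΦQ _ (Φ.map_target hq.1)).1 (by rw [Φ.right_inv hq.1]; exact hq.2)⟩
  have hgmaps : MapsTo g (Φ.source ∩ Q) (Φ.target ∩ Q') := fun p hp => by
    rw [← hΦg hp]
    exact ⟨Φ.map_source hp.1, (hΦQ p hp.1).2 hp.2⟩
  have hleft : LeftInvOn Φ.symm g (Φ.source ∩ Q) := fun p hp => by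
    rw [← hΦg hp]
    exact Φ.left_inv hp.1
  have hright : RightInvOn Φ.symm g (Φ.target ∩ Q') := fun q hq => by
    rw [← hΦg (hmaps hq)]
    exact Φ.right_inv hq.1
  exact ⟨InvOn.bijOn ⟨hleft, hright⟩ hgmaps hmaps, hg.mono hsub,
    hg.contDiffOn_one_of_rightInvOn hU (Φ.continuousOn_symm.mono inter_subset_left)
      (hmaps.mono_right hsub) hright (fun q hq => hinv _ (hmaps hq)), hleft, hright⟩

theorem exists_isC1DiffeoOn_quadrant {ι E Y Z : Type*} [Fintype ι]
    [NormedAddCommGroup E] [NormedSpace ℝ E] [CompleteSpace E]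
    [NormedAddCommGroup Y] [NormedSpace ℝ Y] [CompleteSpace Y]
    [NormedAddCommGroup Z] [NormedSpace ℝ Z] [CompleteSpace Z]
    {V : Set ((ι → ℝ) × E)} (hV : IsOpen V) {f : (ι → ℝ) × E → Y}
    (hf : ContDiffOn ℝ 1 f (V ∩ quadrant ι E)) {x : (ι → ℝ) × E} (hx : x ∈ V ∩ quadrant ι E)
    {f' : (ι → ℝ) × E →L[ℝ] Y} (hf' : HasFDerivWithinAt f f' (V ∩ quadrant ι E) x)
    (ℓ : E →L[ℝ] Z) (hbij : Function.Bijective fun p => (f' p, p.1, ℓ p.2)) :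
    ∃ (Uhat : Set ((ι → ℝ) × E)) (U' : Set (Y × (ι → ℝ) × Z))
      (h : Y × (ι → ℝ) × Z → (ι → ℝ) × E),
      x ∈ Uhat ∧ Uhat ⊆ V ∩ quadrant ι E ∧ (∃ W, IsOpen W ∧ Uhat = W ∩ quadrant ι E) ∧
      (∃ W', IsOpen W' ∧ U' = W' ∩ Prod.snd ⁻¹' quadrant ι Z) ∧
      IsC1DiffeoOn (fun p => (f p, p.1, ℓ p.2)) h Uhat U' := by
  set Q := quadrant ι E
  set Q' : Set (Y × (ι → ℝ) × Z) := Prod.snd ⁻¹' quadrant ι Z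
  set g : (ι → ℝ) × E → Y × (ι → ℝ) × Z := fun p => (f p, p.1, ℓ p.2)
  set T : (ι → ℝ) × E →L[ℝ] Y × (ι → ℝ) × Z :=
    f'.prod ((ContinuousLinearMap.fst ℝ _ _).prod (ℓ ∘L ContinuousLinearMap.snd ℝ _ _))
  set A := ContinuousLinearEquiv.ofBijective T (LinearMap.ker_eq_bot.2 hbij.1)
    (LinearMap.range_eq_top.2 hbij.2)
  have hAT : (A : (ι → ℝ) × E →L[ℝ] Y × (ι → ℝ) × Z) = T :=
    ContinuousLinearEquiv.coe_ofBijective _ _ _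
  have hU : UniqueDiffOn ℝ (V ∩ Q) := by
    rw [inter_comm]; exact uniqueDiffOn_quadrant.inter hV
  have hg : ContDiffOn ℝ 1 g (V ∩ Q) :=
    hf.prodMk (contDiff_fst.prodMk (ℓ.contDiff.comp contDiff_snd)).contDiffOn
  have hgA : HasFDerivWithinAt g (A : (ι → ℝ) × E →L[ℝ] Y × (ι → ℝ) × Z) (V ∩ Q) x := by
    rw [hAT]
    exact hf'.prodMk (hasFDerivWithinAt_fst.prodMk
      (ℓ.hasFDerivAt.comp_hasFDerivWithinAt x hasFDerivWithinAt_snd))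
  obtain ⟨c, hc, hcA⟩ : ∃ c : ℝ≥0, 0 < c ∧
      (Subsingleton ((ι → ℝ) × E) ∨ c < ‖(A.symm : Y × (ι → ℝ) × Z →L[ℝ] (ι → ℝ) × E)‖₊⁻¹) := by
    rcases A.subsingleton_or_nnnorm_symm_pos with h | h
    · exact ⟨1, one_pos, Or.inl h⟩
    · exact ⟨_, half_pos (inv_pos.2 h), Or.inr (NNReal.half_lt_self (inv_pos.2 h).ne')⟩
  obtain ⟨ε, hε, hsub, hinv, happrox⟩ :=
    hg.exists_approximatesLinearOn_ball_inter hV convex_quadrant hU hx hgA hc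
  have hr : MapsTo (quadrantRetraction ι E) (ball x ε) (ball x ε ∩ Q) := fun p hp => by
    refine ⟨?_, quadrantRetraction_mem p⟩
    rw [mem_ball, ← quadrantRetraction_of_mem hx.2]
    exact (lipschitzWith_quadrantRetraction.dist_le_mul p x).trans_lt (by simpa using hp)
  set Φ := (happrox.comp_retraction lipschitzWith_quadrantRetraction hr).toOpenPartialHomeomorph
    _ (ball x ε) hcA isOpen_ball
  have hΦ : EqOn Φ g (Φ.source ∩ Q) := fun p hp => by
    simp [Φ, quadrantRetraction_of_mem hp.2]
  have hΦQ : ∀ p ∈ Φ.source, Φ p ∈ Q' ↔ p ∈ Q := fun p _ => by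
    have : (Φ p).2.1 = p.1 := by simp [Φ, hAT, T, g]
    exact forall_congr' fun i => by rw [this]
  exact ⟨Φ.source ∩ Q, Φ.target ∩ Q', Φ.symm, ⟨mem_ball_self hε, hx.2⟩, hsub,
    ⟨_, isOpen_ball, rfl⟩, ⟨_, Φ.open_target, rfl⟩,
    Φ.isC1DiffeoOn_inter hg hU hsub hΦ hΦQ hinv⟩

section LinearAlgebra

variable {R E : Type*} [Ring R] [AddCommGroup E] [Module R E]

theorem Submodule.apply_mem_and_sub_apply_mem_of_isCompl {K L : Submodule R E}
    (hKL : IsCompl K L) {pr : E →ₗ[R] E} (hprK : ∀ k ∈ K, pr k = k)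
    (hprL : ∀ l ∈ L, pr l = 0) (e : E) :
    pr e ∈ K ∧ e - pr e ∈ L := by
  obtain ⟨k, hk, l, hl, rfl⟩ := Submodule.mem_sup.1 (hKL.sup_eq_top ▸ Submodule.mem_top (x := e))
  rw [map_add, hprK k hk, hprL l hl, add_zero, add_sub_cancel_left]
  exact ⟨hk, hl⟩

theorem bijective_prod_fst_of_isCompl {P Y : Type*} [AddCommGroup P] [Module R P]
    [AddCommGroup Y] [Module R Y] (f' : P × E →ₗ[R] Y)
    (hsurj : Function.Surjective fun e => f' (0, e))
    {K L : Submodule R E} (hK : ∀ e, e ∈ K ↔ f' (0, e) = 0) (hKL : IsCompl K L)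
    (ℓ : E →ₗ[R] K) (hℓK : ∀ k : K, ℓ k = k) (hℓL : ∀ l ∈ L, ℓ l = 0) :
    Function.Bijective fun p : P × E => (f' p, p.1, ℓ p.2) := by
  have hsubL : ∀ e, e - ℓ e ∈ L := fun e =>
    (Submodule.apply_mem_and_sub_apply_mem_of_isCompl hKL (pr := K.subtype ∘ₗ ℓ)
      (fun k hk => congrArg Subtype.val (hℓK ⟨k, hk⟩)) (fun l hl => by simp [hℓL l hl]) e).2
  set φ := f' ∘ₗ LinearMap.inr R P E
  have hφ : ∀ e, f' (0, e) = φ e := fun _ => rfl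
  have hsplit : ∀ v e, f' (v, e) = f' (v, 0) + φ e := fun v e => by
    rw [← hφ, ← map_add, Prod.mk_add_mk, add_zero, zero_add]
  have hK0 : ∀ k : K, φ k = 0 := fun k => (hK k).1 k.2
  refine ⟨fun ⟨v, e⟩ ⟨v', e'⟩ h => ?_, fun ⟨a, v, k⟩ => ?_⟩
  · simp only [Prod.mk.injEq] at h
    obtain ⟨hf, rfl, hℓ⟩ := h
    have hdK : e - e' ∈ K := (hK _).2 <| by
      rw [hφ, map_sub, ← sub_eq_zero.2 hf, hsplit v e, hsplit v e']
      abel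
    have hdL : e - e' ∈ L := by simpa [hℓ] using hsubL (e - e')
    rw [sub_eq_zero.1 (Submodule.disjoint_def.1 hKL.disjoint _ hdK hdL)]
  · obtain ⟨e₀, he₀⟩ := hsurj (a - f' (v, 0))
    refine ⟨(v, k + (e₀ - ℓ e₀)), Prod.ext ?_ (Prod.ext rfl ?_)⟩
    · change f' (v, _) = a
      rw [hsplit, map_add, map_sub, hK0, hK0, ← hφ, show f' (0, e₀) = _ from he₀]
      abel
    · change ℓ (k + (e₀ - ℓ e₀)) = k
      rw [map_add, map_sub, hℓK, hℓK, sub_self, add_zero]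

end LinearAlgebra

theorem IsC1DiffeoOn.comp_left {X G₀ G : Type*} [NormedAddCommGroup X] [NormedSpace ℝ X]
    [NormedAddCommGroup G₀] [NormedSpace ℝ G₀] [NormedAddCommGroup G] [NormedSpace ℝ G]
    {g : X → G₀} {h : G₀ → X} {s : Set X} {t : Set G₀} (hd : IsC1DiffeoOn g h s t)
    (Φ : G₀ →L[ℝ] G) (Ψ : G →L[ℝ] G₀) (hΨΦ : Function.LeftInverse Ψ Φ) :
    IsC1DiffeoOn (Φ ∘ g) (h ∘ Ψ) s (Φ '' t) := by
  obtain ⟨hbij, hg, hh, hleft, hright⟩ := hd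
  have hΨ : MapsTo Ψ (Φ '' t) t := by
    rintro _ ⟨z, hz, rfl⟩
    rwa [hΨΦ z]
  refine ⟨hΨΦ.injective.injOn.bijOn_image.comp hbij, Φ.contDiff.comp_contDiffOn hg,
    hh.comp Ψ.contDiff.contDiffOn hΨ, fun p hp => ?_, ?_⟩
  · simp only [Function.comp_apply, hΨΦ _, hleft hp]
  · rintro _ ⟨z, hz, rfl⟩
    simp only [Function.comp_apply, hΨΦ z, hright hz]

theorem Function.LeftInverse.image_inter {α β : Type*} {Φ : α → β} {Ψ : β → α}
    (hΨΦ : Function.LeftInverse Ψ Φ) (W S : Set α) : Φ '' (W ∩ S) = Ψ ⁻¹' W ∩ Φ '' S := by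
  rw [inter_comm (Ψ ⁻¹' W), ← image_inter_preimage, ← preimage_comp, hΨΦ.comp_eq_id,
    preimage_id, inter_comm]

theorem IsC1DiffeoOn.exists_coe_submodule {X Y P E : Type*} [NormedAddCommGroup X]
    [NormedSpace ℝ X] [NormedAddCommGroup Y] [NormedSpace ℝ Y] [NormedAddCommGroup P]
    [NormedSpace ℝ P] [NormedAddCommGroup E] [NormedSpace ℝ E] {K : Submodule ℝ E}
    (ρ : E →L[ℝ] K) (hρ : ∀ k : K, ρ k = k) {g : X → Y × P × K} {h₀ : Y × P × K → X}
    {s : Set X} {W : Set (Y × P × K)} (hW : IsOpen W) {C : Set P}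
    (hd : IsC1DiffeoOn g h₀ s (W ∩ {z | z.2.1 ∈ C})) :
    ∃ (U' : Set (Y × P × E)) (h : Y × P × E → X), U' ⊆ {q | q.2.1 ∈ C ∧ q.2.2 ∈ K} ∧
      (∃ W', IsOpen W' ∧ U' = W' ∩ {q | q.2.1 ∈ C ∧ q.2.2 ∈ K}) ∧
      IsC1DiffeoOn (fun p => ((g p).1, (g p).2.1, ((g p).2.2 : E))) h s U' := by
  set Φ := (ContinuousLinearMap.id ℝ Y).prodMap ((ContinuousLinearMap.id ℝ P).prodMap K.subtypeL)
  set Ψ := (ContinuousLinearMap.id ℝ Y).prodMap ((ContinuousLinearMap.id ℝ P).prodMap ρ)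
  have hΨΦ : Function.LeftInverse Ψ Φ := fun z => Prod.ext rfl (Prod.ext rfl (hρ z.2.2))
  have hC : Φ '' {z | z.2.1 ∈ C} = {q | q.2.1 ∈ C ∧ q.2.2 ∈ K} := by
    ext q
    constructor
    · rintro ⟨z, hz, rfl⟩
      exact ⟨hz, z.2.2.2⟩
    · rintro ⟨hq, hqK⟩
      exact ⟨(q.1, q.2.1, ⟨q.2.2, hqK⟩), hq, rfl⟩
  refine ⟨Φ '' (W ∩ {z | z.2.1 ∈ C}), h₀ ∘ Ψ, ?_, ⟨Ψ ⁻¹' W, hW.preimage Ψ.continuous, ?_⟩,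
    hd.comp_left Φ Ψ hΨΦ⟩
  · rw [← hC]
    exact image_mono inter_subset_right
  · rw [← hC, hΨΦ.image_inter]

theorem stmt0_general {E : Type*} [NormedAddCommGroup E] [NormedSpace ℝ E] [CompleteSpace E]
    {s n : ℕ}
    (Q : Set ((Fin s → ℝ) × E)) (hQ : Q = {p | ∀ i, 0 ≤ p.1 i})
    (U : Set ((Fin s → ℝ) × E))
    (hUopen : ∃ V, IsOpen V ∧ U = V ∩ Q)
    (f : (Fin s → ℝ) × E → (Fin n → ℝ))
    (hf : ContDiffOn ℝ 1 f U)
    (x : (Fin s → ℝ) × E) (hxU : x ∈ U)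
    (f' : ((Fin s → ℝ) × E) →L[ℝ] (Fin n → ℝ))
    (hf' : HasFDerivWithinAt f f' U x)
    (hsurj : Function.Surjective fun e : E => f' (0, e))
    (K : Submodule ℝ E) (hK : ∀ e : E, e ∈ K ↔ f' (0, e) = 0) :
    (∃ L : Submodule ℝ E, IsClosed (L : Set E) ∧ IsCompl K L) ∧
    (∀ L : Submodule ℝ E, IsClosed (L : Set E) → IsCompl K L →
      ∀ pr : E →L[ℝ] E, (∀ k ∈ K, pr k = k) → (∀ l ∈ L, pr l = 0) →
      ∃ (Uhat : Set ((Fin s → ℝ) × E)) (U' : Set ((Fin n → ℝ) × (Fin s → ℝ) × E))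
        (h : (Fin n → ℝ) × (Fin s → ℝ) × E → (Fin s → ℝ) × E),
        x ∈ Uhat ∧ Uhat ⊆ U ∧ (∃ V, IsOpen V ∧ Uhat = V ∩ Q) ∧
        U' ⊆ {p | (∀ i, 0 ≤ p.2.1 i) ∧ p.2.2 ∈ K} ∧
        (∃ W, IsOpen W ∧ U' = W ∩ {p | (∀ i, 0 ≤ p.2.1 i) ∧ p.2.2 ∈ K}) ∧
        Set.BijOn (fun p => (f p, p.1, pr p.2)) Uhat U' ∧
        ContDiffOn ℝ 1 (fun p => (f p, p.1, pr p.2)) Uhat ∧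
        ContDiffOn ℝ 1 h U' ∧
        (∀ p ∈ Uhat, h (f p, p.1, pr p.2) = p) ∧
        (∀ q ∈ U', (f (h q), (h q).1, pr (h q).2) = q)) := by
  subst hQ
  obtain ⟨V, hV, rfl⟩ := hUopen
  have hKker : K = (f' ∘L ContinuousLinearMap.inr ℝ (Fin s → ℝ) E).ker := Submodule.ext hK
  refine ⟨?_, fun L _ hKL pr hprK hprL => ?_⟩
  · rw [hKker]
    exact ContinuousLinearMap.ker_closedComplemented_of_finiteDimensional_range _
      |>.exists_isClosed_isCompl
  have hpr : ∀ e, pr e ∈ K := fun e =>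
    (Submodule.apply_mem_and_sub_apply_mem_of_isCompl hKL (pr := pr) hprK hprL e).1
  have : CompleteSpace K := by
    rw [hKker]
    exact (ContinuousLinearMap.isClosed_ker _).completeSpace_coe
  set projK := pr.codRestrict K hpr
  have hprojK : ∀ k : K, projK k = k := fun k => Subtype.ext (hprK k k.2)
  obtain ⟨Uhat, U₀, h₀, hxU, hUV, hUhat, ⟨W, hW, rfl⟩, hdiff⟩ :=
    exists_isC1DiffeoOn_quadrant hV hf hxU hf' projK
      (bijective_prod_fst_of_isCompl f'.toLinearMap hsurj hK hKL projK.toLinearMap hprojK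
        fun l hl => Subtype.ext (hprL l hl))
  obtain ⟨U', h, hU'sub, hU'open, hd⟩ :=
    hdiff.exists_coe_submodule projK hprojK hW (C := {v | ∀ i, 0 ≤ v i})
  exact ⟨Uhat, U', h, hxU, hUV, hUhat, hU'sub, hU'open, hd⟩

/-- Normal form of a `C¹` local submersion to `ℝⁿ` on a quadrant `[0,∞)^s × E` in a Banach
space: the kernel `K` of the corner-restricted derivative admits a closed complement `L`, and
for any such complement the map `g (v, e) = (f (v, e), v, pr e)` restricts to a
`C¹`-diffeomorphism from a relatively open neighborhood of `x` in the quadrant onto a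
relatively open subset of `ℝⁿ × [0,∞)^s × K`. -/
theorem stmt0 {E : Type*} [NormedAddCommGroup E] [NormedSpace ℝ E] [CompleteSpace E]
    {s n : ℕ}
    (Q : Set ((Fin s → ℝ) × E)) (hQ : Q = {p | ∀ i, 0 ≤ p.1 i})
    (U : Set ((Fin s → ℝ) × E)) (hUQ : U ⊆ Q)
    (hUopen : ∃ V, IsOpen V ∧ U = V ∩ Q)
    (f : (Fin s → ℝ) × E → (Fin n → ℝ))
    (hf : ContDiffOn ℝ 1 f U)
    (x : (Fin s → ℝ) × E) (hxU : x ∈ U) (hx0 : x.1 = 0)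
    (f' : ((Fin s → ℝ) × E) →L[ℝ] (Fin n → ℝ))
    (hf' : HasFDerivWithinAt f f' U x)
    (hsurj : Function.Surjective fun e : E => f' (0, e))
    (K : Submodule ℝ E) (hK : ∀ e : E, e ∈ K ↔ f' (0, e) = 0) :
    (∃ L : Submodule ℝ E, IsClosed (L : Set E) ∧ IsCompl K L) ∧
    (∀ L : Submodule ℝ E, IsClosed (L : Set E) → IsCompl K L →
      ∀ pr : E →L[ℝ] E, (∀ k ∈ K, pr k = k) → (∀ l ∈ L, pr l = 0) →
      ∃ (Uhat : Set ((Fin s → ℝ) × E)) (U' : Set ((Fin n → ℝ) × (Fin s → ℝ) × E))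
        (h : (Fin n → ℝ) × (Fin s → ℝ) × E → (Fin s → ℝ) × E),
        x ∈ Uhat ∧ Uhat ⊆ U ∧ (∃ V, IsOpen V ∧ Uhat = V ∩ Q) ∧
        U' ⊆ {p | (∀ i, 0 ≤ p.2.1 i) ∧ p.2.2 ∈ K} ∧
        (∃ W, IsOpen W ∧ U' = W ∩ {p | (∀ i, 0 ≤ p.2.1 i) ∧ p.2.2 ∈ K}) ∧
        Set.BijOn (fun p => (f p, p.1, pr p.2)) Uhat U' ∧
        ContDiffOn ℝ 1 (fun p => (f p, p.1, pr p.2)) Uhat ∧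
        ContDiffOn ℝ 1 h U' ∧
        (∀ p ∈ Uhat, h (f p, p.1, pr p.2) = p) ∧
        (∀ q ∈ U', (f (h q), (h q).1, pr (h q).2) = q)) :=
  stmt0_general Q hQ U hUopen f hf x hxU f' hf' hsurj K hK
end

section
/- Let E be a Banach space, U ⊆ [0,∞)^s × E open, f : U → ℝ^n a C¹ map, and x ∈ U ∩ ({0}^s × E) a point where the derivative of the restriction of f to the corner, (d_x f)|_{{0}^s × E} : E → ℝ^n, is surjective with kernel K. Let L be any closed complement of K in E and pr : E → K the projection along L. Then the linear map d_x g : ℝ^s × E → ℝ^n × ℝ^s × K given by (v,e) ↦ (d_x f(v,e), v, pr(e)) is a bounded linear isomorphism. -/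
/-- The derivative `d_x g : ℝ^s × E → ℝⁿ × ℝ^s × K`, `(v, e) ↦ (d_x f (v, e), v, pr e)`, is a
bounded linear isomorphism, where `K` is the kernel of the corner restriction of `d_x f`,
`L` is a closed complement of `K`, and `pr` is the continuous projection onto `K` along `L`. -/
theorem stmt1 {E : Type*} [NormedAddCommGroup E] [NormedSpace ℝ E] [CompleteSpace E]
    {s n : ℕ}
    (f' : ((Fin s → ℝ) × E) →L[ℝ] (Fin n → ℝ))
    (hsurj : Function.Surjective fun e : E => f' (0, e))
    (K : Submodule ℝ E) (hK : ∀ e : E, e ∈ K ↔ f' (0, e) = 0)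
    (L : Submodule ℝ E) (hLclosed : IsClosed (L : Set E)) (hcompl : IsCompl K L)
    (pr : E →L[ℝ] K) (hprK : ∀ k : K, pr (k : E) = k) (hprL : ∀ l ∈ L, pr l = 0) :
    ∃ ψ : ((Fin s → ℝ) × E) ≃L[ℝ] ((Fin n → ℝ) × (Fin s → ℝ) × K),
      ∀ p : (Fin s → ℝ) × E,
        (ψ p : (Fin n → ℝ) × (Fin s → ℝ) × K) = (f' p, p.1, pr p.2) := by
  -- K is closed, hence complete
  have hKclosed : IsClosed (K : Set E) := by
    have : (K : Set E) = (f'.comp (ContinuousLinearMap.inr ℝ (Fin s → ℝ) E)) ⁻¹' {0} := by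
      ext e
      simp [hK e, Set.mem_preimage]
    rw [this]
    exact (isClosed_singleton.preimage (f'.comp _).continuous)
  haveI : CompleteSpace K := hKclosed.completeSpace_coe
  -- the candidate map
  set T : ((Fin s → ℝ) × E) →L[ℝ] ((Fin n → ℝ) × (Fin s → ℝ) × K) :=
    f'.prod ((ContinuousLinearMap.fst ℝ (Fin s → ℝ) E).prod
      (pr.comp (ContinuousLinearMap.snd ℝ (Fin s → ℝ) E))) with hT
  have hTapp : ∀ p : (Fin s → ℝ) × E, T p = (f' p, p.1, pr p.2) := fun p => rfl
  have hsplit : ∀ p : (Fin s → ℝ) × E, f' p = f' (p.1, 0) + f' (0, p.2) := by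
    intro p
    rw [← map_add]
    simp
  have hinj : Function.Injective T := by
    intro p q hpq
    have h1 : f' p = f' q := congrArg Prod.fst hpq
    have h2 : p.1 = q.1 := congrArg (fun x => x.2.1) hpq
    have h3 : pr p.2 = pr q.2 := congrArg (fun x => x.2.2) hpq
    -- show p.2 = q.2
    have hd : f' (0, p.2 - q.2) = 0 := by
      have : f' (p.1 - q.1, p.2 - q.2) = 0 := by
        have h : f' (p - q) = 0 := by rw [map_sub, h1, sub_self]
        have : p - q = (p.1 - q.1, p.2 - q.2) := rfl
        rwa [this] at h
      rw [h2] at this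
      simpa using this
    have hmem : p.2 - q.2 ∈ K := (hK _).2 hd
    have : pr (p.2 - q.2) = ⟨p.2 - q.2, hmem⟩ := hprK ⟨p.2 - q.2, hmem⟩
    have hz : (⟨p.2 - q.2, hmem⟩ : K) = 0 := by
      rw [← this, map_sub, h3, sub_self]
    have : p.2 - q.2 = 0 := congrArg Subtype.val hz
    have h4 : p.2 = q.2 := sub_eq_zero.mp this
    exact Prod.ext h2 h4
  have hsurjT : Function.Surjective T := by
    rintro ⟨y, v, k⟩
    obtain ⟨e0, he0⟩ := hsurj (y - f' (v, (k : E)))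
    -- l0 = e0 - pr e0
    set l0 : E := e0 - (pr e0 : E) with hl0
    have hprl0 : pr l0 = 0 := by
      rw [hl0, map_sub, hprK (pr e0), sub_self]
    have hf'pr : f' (0, (pr e0 : E)) = 0 := (hK _).1 (pr e0).2
    have hfl0 : f' (0, l0) = f' (0, e0) := by
      have : (0, l0) = ((0 : Fin s → ℝ), e0) - (0, (pr e0 : E)) := by
        simp [hl0, Prod.ext_iff]
      rw [this, map_sub, hf'pr, sub_zero]
    refine ⟨(v, (k : E) + l0), ?_⟩
    rw [hTapp]
    have hfv : f' (v, (k : E) + l0) = y := by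
      have : (v, (k : E) + l0) = ((v, (k : E)) : (Fin s → ℝ) × E) + (0, l0) := by
        simp [Prod.ext_iff]
      rw [this, map_add, hfl0]
      simp only at he0
      rw [he0]
      abel
    have hprv : pr ((k : E) + l0) = k := by
      rw [map_add, hprK k, hprl0, add_zero]
    simp [hfv, hprv]
  have hbij : Function.Bijective T := ⟨hinj, hsurjT⟩
  exact ⟨ContinuousLinearEquiv.ofBijective T
      (LinearMap.ker_eq_bot_of_injective hinj)
      (LinearMap.range_eq_top.2 hsurjT),
    fun p => hTapp p⟩
end

section
/- Let E be a Banach space, U open in a quadrant [0,∞)^s × E, r : U → U an idempotent differentiable map with image O, preserving the degeneracy index, and let r_∂ : U_∂ → U_∂ be its boundary restriction with image O_∂ = O ∩ ({0}^s × E). Then for any fixed point x of r in U_∂ (at which r and r_∂ are differentiable), the image of D_x r_∂ equals (im D_x r) ∩ ({0}^s × E), i.e., T_x O_∂ = T_x O ∩ ({0}^s × E). -/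
/-!
Differentiating `r ∘ r = r` at the fixed point `x` shows that `D = D_x r` is idempotent, and
an idempotent linear map restricts to the identity on its range. Since `r` preserves the number
of vanishing corner coordinates, it maps the corner stratum `{0}^s × E` of `U` into itself, so
`D` maps `Z = {0}^s × E` into `Z`. Hence every `ζ ∈ im D ∩ Z` equals `D ζ ∈ D(Z)`.
-/

open Set Filter Topology

theorem IsIdempotentElem.map_eq_range_inf {R M : Type*} [Semiring R] [AddCommMonoid M]
    [Module R M] {f : Module.End R M} (hf : IsIdempotentElem f) {Z : Submodule R M}
    (hZ : Z.map f ≤ Z) : Z.map f = LinearMap.range f ⊓ Z :=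
  le_antisymm (le_inf LinearMap.map_le_range hZ)
    fun y ⟨hy, hyZ⟩ => ⟨y, hyZ, (LinearMap.IsIdempotentElem.mem_range_iff hf).mp hy⟩

theorem Function.eq_zero_of_natCard_zeros_eq {ι M : Type*} [Finite ι] [Zero M] {v : ι → M}
    (h : Nat.card {i // v i = 0} = Nat.card ι) : v = 0 :=
  funext fun _ => by_contra fun hi => (Finite.card_subtype_lt (p := fun i => v i = 0) hi).ne h

theorem uniqueDiffOn_quadrant_s14 (ι E : Type*) [Finite ι] [NormedAddCommGroup E]
    [NormedSpace ℝ E] : UniqueDiffOn ℝ {p : (ι → ℝ) × E | ∀ i, 0 ≤ p.1 i} := by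
  have hQ : {p : (ι → ℝ) × E | ∀ i, 0 ≤ p.1 i} = (univ.pi fun _ => Ici 0) ×ˢ univ := by
    ext p; simp [Pi.le_def]
  rw [hQ]
  exact (UniqueDiffOn.univ_pi fun _ => uniqueDiffOn_Ici 0).prod uniqueDiffOn_univ

theorem HasFDerivWithinAt.isIdempotentElem_of_retraction {𝕜 F : Type*}
    [NontriviallyNormedField 𝕜] [NormedAddCommGroup F] [NormedSpace 𝕜 F] {r : F → F}
    {D : F →L[𝕜] F} {U : Set F} {x : F} (hD : HasFDerivWithinAt r D U x)
    (hU : UniqueDiffWithinAt 𝕜 U x) (hmaps : MapsTo r U U) (hidem : ∀ p ∈ U, r (r p) = r p)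
    (hfix : r x = x) : IsIdempotentElem D := by
  have hcomp : HasFDerivWithinAt (r ∘ r) (D.comp D) U x :=
    HasFDerivWithinAt.comp x (by rwa [hfix]) hD hmaps
  exact hU.eq (hcomp.congr (fun p hp => (hidem p hp).symm) (by simp [hfix])) hD

theorem HasFDerivWithinAt.apply_eq_zero_of_eqOn_submodule {F G : Type*}
    [NormedAddCommGroup F] [NormedSpace ℝ F] [NormedAddCommGroup G] [NormedSpace ℝ G]
    {f : F → G} {f' : F →L[ℝ] G} {V : Set F} {Z : Submodule ℝ F} {x : F}
    (hf : HasFDerivWithinAt f f' (V ∩ Z) x) (hV : V ∈ 𝓝 x) (hx : x ∈ Z)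
    (hconst : ∀ y ∈ V ∩ Z, f y = f x) {ξ : F} (hξ : ξ ∈ Z) : f' ξ = 0 := by
  have hcone : ξ ∈ tangentConeAt ℝ (V ∩ Z) x := by
    rw [inter_comm, tangentConeAt_inter_nhds hV]
    simpa using mem_tangentConeAt_of_segment_subset
      (Z.convex.segment_subset hx (Z.add_mem hx hξ))
  exact hf.unique_on ((hasFDerivWithinAt_const (f x) x _).congr hconst rfl) hcone

theorem stmt14_general {E : Type*} [NormedAddCommGroup E] [NormedSpace ℝ E] {s : ℕ}
    (Q : Set ((Fin s → ℝ) × E)) (hQ : Q = {p | ∀ i, 0 ≤ p.1 i})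
    (U : Set ((Fin s → ℝ) × E))
    (hUopen : ∃ V, IsOpen V ∧ U = V ∩ Q)
    (r : (Fin s → ℝ) × E → (Fin s → ℝ) × E)
    (hmaps : Set.MapsTo r U U)
    (hidem : ∀ p ∈ U, r (r p) = r p)
    (hdeg : ∀ p ∈ U,
      Nat.card {i : Fin s // (r p).1 i = 0} = Nat.card {i : Fin s // p.1 i = 0})
    (x : (Fin s → ℝ) × E) (hx : x ∈ U) (hx0 : x.1 = 0) (hfix : r x = x)
    (D : ((Fin s → ℝ) × E) →L[ℝ] ((Fin s → ℝ) × E))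
    (hD : HasFDerivWithinAt r D U x)
    (Z : Submodule ℝ ((Fin s → ℝ) × E))
    (hZ : Z = (⊥ : Submodule ℝ (Fin s → ℝ)).prod (⊤ : Submodule ℝ E)) :
    Submodule.map (D : ((Fin s → ℝ) × E) →ₗ[ℝ] ((Fin s → ℝ) × E)) Z = LinearMap.range (D : ((Fin s → ℝ) × E) →ₗ[ℝ] ((Fin s → ℝ) × E)) ⊓ Z := by
  obtain ⟨V, hV, rfl⟩ := hUopen
  have hmemZ : ∀ p, p ∈ Z ↔ p.1 = 0 := by simp [hZ, Submodule.mem_prod]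
  have hprojection : IsIdempotentElem D := by
    refine hD.isIdempotentElem_of_retraction ?_ hmaps hidem hfix
    rw [inter_comm]
    exact (hQ ▸ uniqueDiffOn_quadrant_s14 (Fin s) E).inter hV x ⟨hx.2, hx.1⟩
  refine (ContinuousLinearMap.IsIdempotentElem.toLinearMap hprojection).map_eq_range_inf ?_
  rintro _ ⟨ξ, hξ, rfl⟩
  have hcorner : V ∩ Z ⊆ V ∩ Q := fun p ⟨hpV, hpZ⟩ => ⟨hpV, by simp [hQ, (hmemZ p).mp hpZ]⟩
  have hrcorner : ∀ p ∈ V ∩ Z, (r p).1 = (r x).1 := fun p hp => by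
    rw [hfix, hx0]
    refine Function.eq_zero_of_natCard_zeros_eq ((hdeg p (hcorner hp)).trans ?_)
    simp [(hmemZ p).mp hp.2]
  rw [hmemZ]
  exact HasFDerivWithinAt.apply_eq_zero_of_eqOn_submodule
    (hasFDerivAt_fst.comp_hasFDerivWithinAt x (hD.mono hcorner)) (hV.mem_nhds hx.1)
    ((hmemZ x).mpr hx0) hrcorner hξ

/-- Boundary tangent spaces of a tame retract: at a fixed point `x` in the deepest corner of
the quadrant, the tangent space of the boundary retract equals the intersection of the
tangent space of the retract with `{0}^s × E`, i.e.
`D_x r ({0}^s × E) = im(D_x r) ∩ ({0}^s × E)`. -/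
theorem stmt14 {E : Type*} [NormedAddCommGroup E] [NormedSpace ℝ E] {s : ℕ}
    (Q : Set ((Fin s → ℝ) × E)) (hQ : Q = {p | ∀ i, 0 ≤ p.1 i})
    (U : Set ((Fin s → ℝ) × E)) (hUQ : U ⊆ Q)
    (hUopen : ∃ V, IsOpen V ∧ U = V ∩ Q)
    (r : (Fin s → ℝ) × E → (Fin s → ℝ) × E)
    (hmaps : Set.MapsTo r U U)
    (hdiff : DifferentiableOn ℝ r U)
    (hidem : ∀ p ∈ U, r (r p) = r p)
    (hdeg : ∀ p ∈ U,
      Nat.card {i : Fin s // (r p).1 i = 0} = Nat.card {i : Fin s // p.1 i = 0})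
    (x : (Fin s → ℝ) × E) (hx : x ∈ U) (hx0 : x.1 = 0) (hfix : r x = x)
    (D : ((Fin s → ℝ) × E) →L[ℝ] ((Fin s → ℝ) × E))
    (hD : HasFDerivWithinAt r D U x)
    (Z : Submodule ℝ ((Fin s → ℝ) × E))
    (hZ : Z = (⊥ : Submodule ℝ (Fin s → ℝ)).prod (⊤ : Submodule ℝ E)) :
    Submodule.map (D : ((Fin s → ℝ) × E) →ₗ[ℝ] ((Fin s → ℝ) × E)) Z = LinearMap.range (D : ((Fin s → ℝ) × E) →ₗ[ℝ] ((Fin s → ℝ) × E)) ⊓ Z :=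
  stmt14_general Q hQ U hUopen r hmaps hidem hdeg x hx hx0 hfix D hD Z hZ
end
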